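/- If x and y are unit quaternions satisfying Re{x̄ i y} = 0 and ⟨x, y⟩ = 0 (real inner product on ℍ ≅ ℝ⁴), then x̄ i x = −ȳ i y, and x̄ i y is a unit purely imaginary quaternion linearly independent of x̄ i x. -/

import Mathlib

/-- The quaternion unit `i`. -/
def qi : Quaternion ℝ := ⟨0,1,0,0⟩

/-!
Put `u = y x̄`. Then `y = u x`, `Re u = Re (x̄ y) = 0` and `Re (u i) = Re (x̄ i y) = 0`, so `u` is a
unit pure quaternion orthogonal to `i`: it squares to `-1` and anticommutes with `i`. Hence
`ȳ i y = x̄ (ū i u) x = -x̄ i x`. Linear independence is that of the orthonormal pair `x, y`,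
transported by left multiplication with the nonzero quaternion `x̄ i`.
-/

open Quaternion

namespace Quaternion

section CommRing

variable {R : Type*} [CommRing R]

theorem re_mul_comm (a b : ℍ[R]) : (a * b).re = (b * a).re := by
  simp only [re_mul]; ring

theorem mul_comm_eq_neg_of_re_eq_zero {a b : ℍ[R]} (ha : a.re = 0) (hb : b.re = 0)
    (hab : (a * b).re = 0) : b * a = -(a * b) := by
  rw [re_mul, ha, hb] at hab
  ext <;> simp only [re_mul, imI_mul, imJ_mul, imK_mul, re_neg, imI_neg, imJ_neg, imK_neg, ha, hb]
  · linear_combination 2 * hab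
  all_goals ring

theorem star_mul_mul_self_of_anticommute {u q : ℍ[R]} (hu : u * u = -1) (hstar : star u = -u)
    (hanti : q * u = -(u * q)) (x : ℍ[R]) :
    star (u * x) * q * (u * x) = -(star x * q * x) := by
  have hq : star u * q * u = -q := by
    rw [hstar, neg_mul, neg_mul, mul_assoc, hanti, mul_neg, ← mul_assoc, hu, neg_neg, neg_one_mul]
  rw [star_mul, show star x * star u * q * (u * x) = star x * (star u * q * u) * x by noncomm_ring,
    hq, mul_neg, neg_mul]

end CommRing

theorem star_mul_self_of_norm_eq_one {a : ℍ} (h : ‖a‖ = 1) : star a * a = 1 := by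
  rw [star_mul_self, normSq_eq_norm_mul_self, h, mul_one, coe_one]

theorem mul_self_eq_neg_one_of_norm_eq_one {a : ℍ} (h : ‖a‖ = 1) (hre : a.re = 0) :
    a * a = -1 := by
  rw [← sq, sq_eq_neg_normSq.mpr hre, normSq_eq_norm_mul_self, h, mul_one, coe_one]

end Quaternion

theorem linearIndependent_pair_of_inner_eq_zero {𝕜 E : Type*} [RCLike 𝕜] [NormedAddCommGroup E]
    [InnerProductSpace 𝕜 E] {x y : E} (hx : x ≠ 0) (hy : y ≠ 0) (h : inner 𝕜 x y = 0) :
    LinearIndependent 𝕜 ![x, y] := by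
  refine linearIndependent_of_ne_zero_of_inner_eq_zero (by simp [Fin.forall_fin_two, hx, hy]) ?_
  intro i j hij
  fin_cases i <;> fin_cases j <;> simp_all [inner_eq_zero_symm]

theorem LinearIndependent.pair_mul_left {K A : Type*} [Field K] [DivisionRing A] [Algebra K A]
    {x y : A} (h : LinearIndependent K ![x, y]) {a : A} (ha : a ≠ 0) :
    LinearIndependent K ![a * x, a * y] := by
  rw [LinearIndependent.pair_iff] at h ⊢
  intro s t hst
  refine h s t ((mul_eq_zero.mp ?_).resolve_left ha)
  rw [mul_add, mul_smul_comm, mul_smul_comm, hst]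

theorem qi_re : qi.re = 0 := rfl

theorem norm_qi : ‖qi‖ = 1 := by
  rw [← pow_eq_one_iff_of_nonneg (norm_nonneg _) two_ne_zero, sq, ← normSq_eq_norm_mul_self,
    normSq_def']
  simp [qi]

theorem levi_civita_hopf_lemma (x y : Quaternion ℝ)
    (hx : ‖x‖ = 1) (hy : ‖y‖ = 1)
    (hBL : (star x * qi * y).re = 0) (horth : (star x * y).re = 0) :
    star x * qi * x = -(star y * qi * y) ∧
    ‖star x * qi * y‖ = 1 ∧ (star x * qi * y).re = 0 ∧
    LinearIndependent ℝ ![star x * qi * x, star x * qi * y] := by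
  set u := y * star x
  have hy_eq : y = u * x := by rw [mul_assoc, star_mul_self_of_norm_eq_one hx, mul_one]
  have hu_norm : ‖u‖ = 1 := by rw [norm_mul, norm_star, hx, hy, mul_one]
  have hu_re : u.re = 0 := (re_mul_comm _ _).trans horth
  have hu_qi : (u * qi).re = 0 := by rwa [mul_assoc, re_mul_comm]
  have hconj : star y * qi * y = -(star x * qi * x) := by
    rw [hy_eq]
    exact star_mul_mul_self_of_anticommute (mul_self_eq_neg_one_of_norm_eq_one hu_norm hu_re)
      (star_eq_neg.mpr hu_re) (mul_comm_eq_neg_of_re_eq_zero hu_re qi_re hu_qi) x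
  have hxy : LinearIndependent ℝ ![x, y] := by
    refine linearIndependent_pair_of_inner_eq_zero (norm_ne_zero_iff.mp (by simp [hx]))
      (norm_ne_zero_iff.mp (by simp [hy])) ?_
    rw [real_inner_comm, inner_def, re_mul_comm, horth]
  refine ⟨by rw [hconj, neg_neg], by simp [norm_qi, hx, hy], hBL, hxy.pair_mul_left ?_⟩
  simp [← norm_ne_zero_iff, hx, norm_qi]
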